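/- arXiv:1109.0508 — 5 statements merged into one kernel-verified Lean document; each statement's English description precedes it below -/
import Mathlib

section
/- Let (M,d) be a differential module over a ring R (i.e., d² = 0), with a direct sum decomposition M ≅ M₁ ⊕ M₂ ⊕ M₃ and differential written as a 3×3 matrix of maps [L_{ij}]. If the component L₃₂ : M₂ → M₃ is an R-module isomorphism, then d' = L₁₁ − L₁₂ ∘ L₃₂⁻¹ ∘ L₃₁ satisfies (d')² = 0 on M₁. -/
/-- Gaussian elimination: if `(M, d)` is a differential module over a ring `R` with
`M = M₁ ⊕ M₂ ⊕ M₃`, `d` given in block form by the maps `L i j : Mⱼ → Mᵢ`, and the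
component `L₃₂ : M₂ → M₃` is an isomorphism, then
`d' = L₁₁ − L₁₂ ∘ L₃₂⁻¹ ∘ L₃₁` satisfies `d' ∘ d' = 0` on `M₁`. -/
theorem stmt_1 {R : Type*} [Ring R]
    {M₁ M₂ M₃ : Type*} [AddCommGroup M₁] [AddCommGroup M₂] [AddCommGroup M₃]
    [Module R M₁] [Module R M₂] [Module R M₃]
    (L₁₁ : M₁ →ₗ[R] M₁) (L₁₂ : M₂ →ₗ[R] M₁) (L₁₃ : M₃ →ₗ[R] M₁)
    (L₂₁ : M₁ →ₗ[R] M₂) (L₂₂ : M₂ →ₗ[R] M₂) (L₂₃ : M₃ →ₗ[R] M₂)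
    (L₃₁ : M₁ →ₗ[R] M₃) (L₃₂ : M₂ →ₗ[R] M₃) (L₃₃ : M₃ →ₗ[R] M₃)
    (e : M₂ ≃ₗ[R] M₃) (he : (e : M₂ →ₗ[R] M₃) = L₃₂)
    (d : (M₁ × M₂ × M₃) →ₗ[R] (M₁ × M₂ × M₃))
    (hd : ∀ v : M₁ × M₂ × M₃,
      d v = (L₁₁ v.1 + L₁₂ v.2.1 + L₁₃ v.2.2,
             L₂₁ v.1 + L₂₂ v.2.1 + L₂₃ v.2.2,
             L₃₁ v.1 + L₃₂ v.2.1 + L₃₃ v.2.2))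
    (hdd : d ∘ₗ d = 0) :
    (L₁₁ - L₁₂ ∘ₗ (e.symm : M₃ →ₗ[R] M₂) ∘ₗ L₃₁) ∘ₗ
      (L₁₁ - L₁₂ ∘ₗ (e.symm : M₃ →ₗ[R] M₂) ∘ₗ L₃₁) = 0 := by
  have h32 : ∀ m : M₂, L₃₂ m = e m := fun m => by rw [← he]; rfl
  have key : ∀ v : M₁ × M₂ × M₃, d (d v) = 0 := fun v => by
    have := LinearMap.ext_iff.mp hdd v
    simpa using this
  have hx : ∀ x : M₁,
      (L₁₁ (L₁₁ x) + L₁₂ (L₂₁ x) + L₁₃ (L₃₁ x) = 0) ∧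
      (L₃₁ (L₁₁ x) + L₃₂ (L₂₁ x) + L₃₃ (L₃₁ x) = 0) := fun x => by
    have h := key (x, 0, 0)
    rw [hd, hd] at h
    simp only [map_zero, add_zero] at h
    rw [Prod.ext_iff, Prod.ext_iff] at h
    exact ⟨h.1, h.2.2⟩
  have hy : ∀ y : M₂,
      (L₁₁ (L₁₂ y) + L₁₂ (L₂₂ y) + L₁₃ (L₃₂ y) = 0) ∧
      (L₃₁ (L₁₂ y) + L₃₂ (L₂₂ y) + L₃₃ (L₃₂ y) = 0) := fun y => by
    have h := key (0, y, 0)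
    rw [hd, hd] at h
    simp only [map_zero, add_zero, zero_add] at h
    rw [Prod.ext_iff, Prod.ext_iff] at h
    exact ⟨h.1, h.2.2⟩
  ext x
  simp only [LinearMap.comp_apply, LinearMap.sub_apply, LinearMap.coe_comp,
    Function.comp_apply, LinearMap.zero_apply, LinearEquiv.coe_coe]
  set y := e.symm (L₃₁ x) with hy'
  have hey : L₃₂ y = L₃₁ x := by rw [h32]; exact e.apply_symm_apply _
  obtain ⟨h1, h3⟩ := hx x
  obtain ⟨h1', h3'⟩ := hy y
  rw [hey] at h1' h3'
  -- L₃₁ applied to d' x equals e (L₂₂ y - L₂₁ x)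
  have hz : L₃₁ (L₁₁ x - L₁₂ y) = e (L₂₂ y - L₂₁ x) := by
    have h := congrArg₂ (fun a b => a - b) h3 h3'
    simp only [sub_zero] at h
    rw [map_sub, map_sub, ← h32, ← h32] at *
    rw [← sub_eq_zero, ← h]
    abel
  have hz1 : L₁₁ (L₁₁ x - L₁₂ y) = L₁₂ (L₂₂ y - L₂₁ x) := by
    have h := congrArg₂ (fun a b => a - b) h1 h1'
    simp only [sub_zero] at h
    rw [map_sub, map_sub] at *
    rw [← sub_eq_zero, ← h]
    abel
  rw [hz1, hz, e.symm_apply_apply, sub_self]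
end

section
/- With notation as in the Gaussian elimination lemma: if L₃₂ : M₂ → M₃ is an isomorphism, then the map ι : M₁ → M₁ ⊕ M₂ ⊕ M₃ given by ι(x) = x ⊕ (−L₃₂⁻¹L₃₁(x)) ⊕ 0 is a chain map from (M₁, d') to (M, d), where d' = L₁₁ − L₁₂L₃₂⁻¹L₃₁. -/
/-- Gaussian elimination: with `M = M₁ ⊕ M₂ ⊕ M₃`, `d` in block form `[L i j]`, and
`L₃₂` an isomorphism, the map `ι : M₁ → M` given by
`ι(x) = x ⊕ (−L₃₂⁻¹ L₃₁ x) ⊕ 0` is a chain map from `(M₁, d')` to `(M, d)`,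
where `d' = L₁₁ − L₁₂ L₃₂⁻¹ L₃₁`. -/
theorem stmt_2 {R : Type*} [Ring R]
    {M₁ M₂ M₃ : Type*} [AddCommGroup M₁] [AddCommGroup M₂] [AddCommGroup M₃]
    [Module R M₁] [Module R M₂] [Module R M₃]
    (L₁₁ : M₁ →ₗ[R] M₁) (L₁₂ : M₂ →ₗ[R] M₁) (L₁₃ : M₃ →ₗ[R] M₁)
    (L₂₁ : M₁ →ₗ[R] M₂) (L₂₂ : M₂ →ₗ[R] M₂) (L₂₃ : M₃ →ₗ[R] M₂)
    (L₃₁ : M₁ →ₗ[R] M₃) (L₃₂ : M₂ →ₗ[R] M₃) (L₃₃ : M₃ →ₗ[R] M₃)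
    (e : M₂ ≃ₗ[R] M₃) (he : (e : M₂ →ₗ[R] M₃) = L₃₂)
    (d : (M₁ × M₂ × M₃) →ₗ[R] (M₁ × M₂ × M₃))
    (hd : ∀ v : M₁ × M₂ × M₃,
      d v = (L₁₁ v.1 + L₁₂ v.2.1 + L₁₃ v.2.2,
             L₂₁ v.1 + L₂₂ v.2.1 + L₂₃ v.2.2,
             L₃₁ v.1 + L₃₂ v.2.1 + L₃₃ v.2.2))
    (hdd : d ∘ₗ d = 0)
    (ι : M₁ →ₗ[R] M₁ × M₂ × M₃)
    (hι : ∀ x : M₁, ι x = (x, -e.symm (L₃₁ x), 0)) :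
    d ∘ₗ ι = ι ∘ₗ (L₁₁ - L₁₂ ∘ₗ (e.symm : M₃ →ₗ[R] M₂) ∘ₗ L₃₁) := by
  apply LinearMap.ext; intro x
  have hL : ∀ y : M₃, L₃₂ (e.symm y) = y := by
    intro y; rw [← he]; exact e.apply_symm_apply y
  -- third component of ι x is 0 as a map through d
  have h3 : L₃₁ x + L₃₂ (-e.symm (L₃₁ x)) + L₃₃ 0 = 0 := by
    simp [hL]
  -- apply d² = 0 to ι x
  have hdd' : d (d (ι x)) = 0 := by
    have := congrArg (fun f => (f : (M₁ × M₂ × M₃) →ₗ[R] _) (ι x)) hdd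
    simpa using this
  set a := L₁₁ x + L₁₂ (-e.symm (L₃₁ x)) + L₁₃ 0 with ha
  set b := L₂₁ x + L₂₂ (-e.symm (L₃₁ x)) + L₂₃ 0 with hb
  have hdι : d (ι x) = (a, b, 0) := by
    rw [hι x, hd]; simp only [ha, hb]
    exact Prod.ext rfl (Prod.ext rfl h3)
  -- third component of d (a, b, 0) = 0
  have h32 : L₃₁ a + L₃₂ b + L₃₃ 0 = 0 := by
    have := hdd'
    rw [hdι, hd] at this
    exact congrArg (fun v : M₁ × M₂ × M₃ => v.2.2) this
  have hball : b = -e.symm (L₃₁ a) := by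
    rw [← he] at h32
    simp only [map_zero, add_zero] at h32
    have : (e : M₂ →ₗ[R] M₃) b = - L₃₁ a := eq_neg_of_add_eq_zero_right h32
    have := congrArg e.symm this
    simpa using this
  show d (ι x) = ι ((L₁₁ - L₁₂ ∘ₗ (e.symm : M₃ →ₗ[R] M₂) ∘ₗ L₃₁) x)
  rw [hdι, hι]
  have ha' : (L₁₁ - L₁₂ ∘ₗ (e.symm : M₃ →ₗ[R] M₂) ∘ₗ L₃₁) x = a := by
    simp [ha, sub_eq_add_neg]
  rw [ha', hball]
end

section
/- With notation as in the Gaussian elimination lemma: letting π : M → M₁ be the composition of the quotient maps identifying M/(M₂ + d(M₂)) with M₁, and ι(x) = x ⊕ (−L₃₂⁻¹L₃₁(x)) ⊕ 0, and H : M → M the map given in block form by sending M₃ to M₂ via −L₃₂⁻¹ and zero otherwise, one has ι ∘ π − Id_M = d∘H + H∘d. Hence (M₁, d') is a deformation retract of (M, d). -/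
/-- Gaussian elimination, homotopy equation: with `M = M₁ ⊕ M₂ ⊕ M₃`, `d` in block form
`[L i j]`, `L₃₂` an isomorphism, `π : M → M₁` the composition of the quotient maps
identifying `M/(M₂ + d(M₂))` with `M₁` (explicitly `π(x,y,z) = x − L₁₂ L₃₂⁻¹ z`),
`ι(x) = x ⊕ (−L₃₂⁻¹ L₃₁ x) ⊕ 0`, and `H : M → M` sending `M₃` to `M₂` by `−L₃₂⁻¹` and
zero otherwise, one has `π ∘ ι = Id` and `ι ∘ π − Id = d ∘ H + H ∘ d`; hence
`(M₁, d')` is a deformation retract of `(M, d)`. -/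
theorem stmt_3 {R : Type*} [Ring R]
    {M₁ M₂ M₃ : Type*} [AddCommGroup M₁] [AddCommGroup M₂] [AddCommGroup M₃]
    [Module R M₁] [Module R M₂] [Module R M₃]
    (L₁₁ : M₁ →ₗ[R] M₁) (L₁₂ : M₂ →ₗ[R] M₁) (L₁₃ : M₃ →ₗ[R] M₁)
    (L₂₁ : M₁ →ₗ[R] M₂) (L₂₂ : M₂ →ₗ[R] M₂) (L₂₃ : M₃ →ₗ[R] M₂)
    (L₃₁ : M₁ →ₗ[R] M₃) (L₃₂ : M₂ →ₗ[R] M₃) (L₃₃ : M₃ →ₗ[R] M₃)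
    (e : M₂ ≃ₗ[R] M₃) (he : (e : M₂ →ₗ[R] M₃) = L₃₂)
    (d : (M₁ × M₂ × M₃) →ₗ[R] (M₁ × M₂ × M₃))
    (hd : ∀ v : M₁ × M₂ × M₃,
      d v = (L₁₁ v.1 + L₁₂ v.2.1 + L₁₃ v.2.2,
             L₂₁ v.1 + L₂₂ v.2.1 + L₂₃ v.2.2,
             L₃₁ v.1 + L₃₂ v.2.1 + L₃₃ v.2.2))
    (hdd : d ∘ₗ d = 0)
    (ι : M₁ →ₗ[R] M₁ × M₂ × M₃)
    (hι : ∀ x : M₁, ι x = (x, -e.symm (L₃₁ x), 0))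
    (π : (M₁ × M₂ × M₃) →ₗ[R] M₁)
    (hπ : ∀ v : M₁ × M₂ × M₃, π v = v.1 - L₁₂ (e.symm v.2.2))
    (H : (M₁ × M₂ × M₃) →ₗ[R] (M₁ × M₂ × M₃))
    (hH : ∀ v : M₁ × M₂ × M₃, H v = (0, -e.symm v.2.2, 0)) :
    π ∘ₗ ι = LinearMap.id ∧
      ι ∘ₗ π - LinearMap.id = d ∘ₗ H + H ∘ₗ d := by
  subst he
  have key : ∀ w : M₂, L₃₁ (L₁₂ w) + e (L₂₂ w) + L₃₃ (e w) = 0 := by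
    intro w
    have h := LinearMap.congr_fun hdd (0, w, 0)
    rw [LinearMap.comp_apply, hd, hd] at h
    simpa using congrArg (fun v : M₁ × M₂ × M₃ => v.2.2) h
  constructor
  · ext x
    simp [hπ, hι]
  · apply LinearMap.ext
    rintro ⟨x, y, z⟩
    have h3 := key (e.symm z)
    have h3' : L₃₁ (L₁₂ (e.symm z)) = -(e (L₂₂ (e.symm z))) - L₃₃ z := by
      have : e (e.symm z) = z := e.apply_symm_apply z
      rw [this] at h3
      linear_combination (norm := abel) h3
    simp only [LinearMap.sub_apply, LinearMap.add_apply, LinearMap.comp_apply,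
      LinearMap.id_apply, hπ, hι, hH, hd, Prod.mk_sub_mk, Prod.mk_add_mk, Prod.ext_iff]
    simp [map_add, map_sub, map_neg, h3', e.apply_symm_apply]
    abel
end

section
/- Stable isomorphism is an equivalence relation on pairs (M, W) where W is an F-vector space and M is a module over P_W = Sym(W). In particular, it is transitive: if (M, W) is stably isomorphic to (M', W') and (M', W') is stably isomorphic to (M'', W''), then (M, W) is stably isomorphic to (M'', W''). -/
/-! Symmetric algebras and stable isomorphism of modules over them. -/

/-- The relation on the tensor algebra whose `RingQuot` is the symmetric algebra. -/
inductive SymRel (R : Type*) [CommRing R] (M : Type*) [AddCommGroup M] [Module R M] :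
    TensorAlgebra R M → TensorAlgebra R M → Prop
  | mul_comm (x y : TensorAlgebra R M) : SymRel R M (x * y) (y * x)

/-- The symmetric algebra of a module: the tensor algebra modulo commutativity. -/
def SymmAlgebra (R : Type*) [CommRing R] (M : Type*) [AddCommGroup M] [Module R M] : Type _ :=
  RingQuot (SymRel R M)

private lemma SymmAlgebra.mul_comm' {R : Type*} [CommRing R] {M : Type*}
    [AddCommGroup M] [Module R M] (a b : RingQuot (SymRel R M)) : a * b = b * a := by
  obtain ⟨x, rfl⟩ := RingQuot.mkRingHom_surjective _ a
  obtain ⟨y, rfl⟩ := RingQuot.mkRingHom_surjective _ b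
  rw [← map_mul, ← map_mul]
  exact RingQuot.mkRingHom_rel (SymRel.mul_comm x y)

noncomputable instance SymmAlgebra.instCommRing (R : Type*) [CommRing R] (M : Type*)
    [AddCommGroup M] [Module R M] : CommRing (SymmAlgebra R M) :=
  { (inferInstance : Ring (RingQuot (SymRel R M))) with
    mul_comm := SymmAlgebra.mul_comm' }

noncomputable instance SymmAlgebra.instAlgebra (R : Type*) [CommRing R] (M : Type*)
    [AddCommGroup M] [Module R M] : Algebra R (SymmAlgebra R M) :=
  inferInstanceAs (Algebra R (RingQuot (SymRel R M)))

/-- Functoriality of the symmetric algebra: the algebra map `Sym(f)` induced by a linear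
map `f : M →ₗ[R] N`. -/
noncomputable def SymmAlgebra.map (R : Type*) [CommRing R] {M N : Type*}
    [AddCommGroup M] [Module R M] [AddCommGroup N] [Module R N] (f : M →ₗ[R] N) :
    SymmAlgebra R M →ₐ[R] SymmAlgebra R N :=
  RingQuot.liftAlgHom R
    ⟨((RingQuot.mkAlgHom R (SymRel R N)).comp
        (TensorAlgebra.lift R ((TensorAlgebra.ι R).comp f))),
      by
        intro x y h
        cases h with
        | mul_comm a b =>
          show (RingQuot.mkAlgHom R (SymRel R N))
              ((TensorAlgebra.lift R ((TensorAlgebra.ι R).comp f)) (a * b)) =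
            (RingQuot.mkAlgHom R (SymRel R N))
              ((TensorAlgebra.lift R ((TensorAlgebra.ι R).comp f)) (b * a))
          rw [map_mul, map_mul, map_mul, map_mul]
          exact SymmAlgebra.mul_comm' _ _⟩

/-- `(M, W)` is stably isomorphic to `(M', W')`: there is an `F`-vector space `V` and
injections `i : W ↪ V`, `i' : W' ↪ V` inducing an isomorphism
`M ⊗_{Sym(W)} Sym(V) ≅ M' ⊗_{Sym(W')} Sym(V)` of `Sym(V)`-modules. -/
def StablyIso (F : Type) [Field F]
    (W : Type) [AddCommGroup W] [Module F W]
    (W' : Type) [AddCommGroup W'] [Module F W']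
    (M : Type) [AddCommGroup M] [Module (SymmAlgebra F W) M]
    (M' : Type) [AddCommGroup M'] [Module (SymmAlgebra F W') M'] : Prop :=
  ∃ (V : Type) (ag : AddCommGroup V),
    letI := ag
    ∃ mo : Module F V,
      letI := mo
      ∃ (i : W →ₗ[F] V) (i' : W' →ₗ[F] V),
        Function.Injective i ∧ Function.Injective i' ∧
          (letI : Algebra (SymmAlgebra F W) (SymmAlgebra F V) :=
            ((SymmAlgebra.map F i).toRingHom).toAlgebra
           letI : Algebra (SymmAlgebra F W') (SymmAlgebra F V) :=
            ((SymmAlgebra.map F i').toRingHom).toAlgebra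
           Nonempty ((TensorProduct (SymmAlgebra F W) (SymmAlgebra F V) M)
              ≃ₗ[SymmAlgebra F V]
             (TensorProduct (SymmAlgebra F W') (SymmAlgebra F V) M')))

/-! Reflexivity and symmetry are immediate. For transitivity, given ambient spaces
`W ↪ V₁ ↩ W'` and `W' ↪ V₂ ↩ W''`, glue them along `W'`: in the pushout
`V = (V₁ × V₂) ⧸ W'` both `V₁` and `V₂` still embed, because `W'` embeds in each.
Base change along `Sym(V₁) → Sym(V)` and `Sym(V₂) → Sym(V)` turns the two given
isomorphisms into isomorphisms over `Sym(V)` that compose, since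
`Sym(V) ⊗_{Sym(V₁)} (Sym(V₁) ⊗_{Sym(W)} M) ≅ Sym(V) ⊗_{Sym(W)} M`. -/

namespace SymmAlgebra

variable {R : Type*} [CommRing R] {M N P : Type*} [AddCommGroup M] [Module R M]
  [AddCommGroup N] [Module R N] [AddCommGroup P] [Module R P]

variable (R) in
noncomputable def ι : M →ₗ[R] SymmAlgebra R M :=
  (RingQuot.mkAlgHom R (SymRel R M)).toLinearMap ∘ₗ TensorAlgebra.ι R

theorem hom_ext {S : Type*} [Semiring S] [Algebra R S] {f g : SymmAlgebra R M →ₐ[R] S}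
    (h : f.toLinearMap ∘ₗ ι R = g.toLinearMap ∘ₗ ι R) : f = g :=
  RingQuot.ringQuot_ext' _ _ _ (TensorAlgebra.hom_ext h)

@[simp]
theorem map_ι (f : M →ₗ[R] N) (x : M) : map R f (ι R x) = ι R (f x) := by
  change RingQuot.liftAlgHom R _ (RingQuot.mkAlgHom R (SymRel R M) (TensorAlgebra.ι R x)) = _
  erw [RingQuot.liftAlgHom_mkAlgHom_apply]
  change RingQuot.mkAlgHom R (SymRel R N) (TensorAlgebra.lift R (TensorAlgebra.ι R ∘ₗ f)
    (TensorAlgebra.ι R x)) = _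
  rw [TensorAlgebra.lift_ι_apply]
  rfl

theorem map_comp (g : N →ₗ[R] P) (f : M →ₗ[R] N) :
    map R (g ∘ₗ f) = (map R g).comp (map R f) :=
  hom_ext <| by ext x; simp

theorem isScalarTower_map {f : M →ₗ[R] N} {g : N →ₗ[R] P} {h : M →ₗ[R] P}
    (hgf : g ∘ₗ f = h) :
    letI := (map R f).toRingHom.toAlgebra
    letI := (map R g).toRingHom.toAlgebra
    letI := (map R h).toRingHom.toAlgebra
    IsScalarTower (SymmAlgebra R M) (SymmAlgebra R N) (SymmAlgebra R P) :=
  letI := (map R f).toRingHom.toAlgebra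
  letI := (map R g).toRingHom.toAlgebra
  letI := (map R h).toRingHom.toAlgebra
  IsScalarTower.of_algebraMap_eq' <| by
    subst hgf
    exact congrArg AlgHom.toRingHom (map_comp g f)

end SymmAlgebra

namespace LinearMap

variable {R : Type*} [Ring R] {W V₁ V₂ : Type*} [AddCommGroup W] [Module R W]
  [AddCommGroup V₁] [Module R V₁] [AddCommGroup V₂] [Module R V₂]
  (f : W →ₗ[R] V₁) (g : W →ₗ[R] V₂)

abbrev Pushout : Type _ := (V₁ × V₂) ⧸ range (f.prod (-g))

def pushoutInl : V₁ →ₗ[R] f.Pushout g := (range (f.prod (-g))).mkQ ∘ₗ inl R V₁ V₂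

def pushoutInr : V₂ →ₗ[R] f.Pushout g := (range (f.prod (-g))).mkQ ∘ₗ inr R V₁ V₂

theorem pushoutInl_comp : f.pushoutInl g ∘ₗ f = f.pushoutInr g ∘ₗ g := by
  ext w
  refine (Submodule.Quotient.eq _).mpr ⟨w, ?_⟩
  simp

variable {f g}

theorem pushoutInl_injective (hg : Function.Injective g) :
    Function.Injective (f.pushoutInl g) := by
  refine (injective_iff_map_eq_zero _).mpr fun v hv => ?_
  obtain ⟨w, hw⟩ := (Submodule.Quotient.mk_eq_zero _).mp hv
  simp only [prod_apply, Function.prod, neg_apply, inl_apply, Prod.mk.injEq, neg_eq_zero] at hw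
  rw [← hw.1, hg (hw.2.trans g.map_zero.symm), map_zero]

theorem pushoutInr_injective (hf : Function.Injective f) :
    Function.Injective (f.pushoutInr g) := by
  refine (injective_iff_map_eq_zero _).mpr fun v hv => ?_
  obtain ⟨w, hw⟩ := (Submodule.Quotient.mk_eq_zero _).mp hv
  simp only [prod_apply, Function.prod, neg_apply, inr_apply, Prod.mk.injEq] at hw
  rw [← hw.2, hf (hw.1.trans f.map_zero.symm), map_zero, neg_zero]

end LinearMap

open TensorProduct in
noncomputable def LinearEquiv.extendBaseChange {R R' A B : Type*} [CommRing R] [CommRing R']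
    [CommRing A] [CommRing B] [Algebra R A] [Algebra R' A] [Algebra A B] [Algebra R B]
    [Algebra R' B] [IsScalarTower R A B] [IsScalarTower R' A B] {M M' : Type*}
    [AddCommGroup M] [Module R M] [AddCommGroup M'] [Module R' M']
    (e : A ⊗[R] M ≃ₗ[A] A ⊗[R'] M') : B ⊗[R] M ≃ₗ[B] B ⊗[R'] M' :=
  (AlgebraTensorModule.cancelBaseChange R A B B M).symm ≪≫ₗ
    AlgebraTensorModule.congr (LinearEquiv.refl B B) e ≪≫ₗ
    AlgebraTensorModule.cancelBaseChange R' A B B M'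

namespace StablyIso

variable {F : Type} [Field F] {W W' W'' : Type} [AddCommGroup W] [Module F W]
  [AddCommGroup W'] [Module F W'] [AddCommGroup W''] [Module F W'']
  {M M' M'' : Type} [AddCommGroup M] [Module (SymmAlgebra F W) M]
  [AddCommGroup M'] [Module (SymmAlgebra F W') M']
  [AddCommGroup M''] [Module (SymmAlgebra F W'') M'']

theorem of_linearEquiv {N : Type} [AddCommGroup N] [Module (SymmAlgebra F W) N]
    (e : M ≃ₗ[SymmAlgebra F W] N) : StablyIso F W W M N := by
  let := (SymmAlgebra.map F (LinearMap.id : W →ₗ[F] W)).toRingHom.toAlgebra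
  exact ⟨W, _, _, .id, .id, Function.injective_id, Function.injective_id,
    ⟨e.baseChange _ _ _ _⟩⟩

theorem refl : StablyIso F W W M M :=
  of_linearEquiv (.refl _ _)

theorem symm : StablyIso F W W' M M' → StablyIso F W' W M' M := by
  rintro ⟨V, _, _, i, i', hi, hi', ⟨e⟩⟩
  exact ⟨V, _, _, i', i, hi', hi, ⟨e.symm⟩⟩

theorem trans (h₁ : StablyIso F W W' M M') (h₂ : StablyIso F W' W'' M' M'') :
    StablyIso F W W'' M M'' := by
  obtain ⟨V₁, _, _, j, j', hj, hj', ⟨e₁⟩⟩ := h₁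
  obtain ⟨V₂, _, _, k', k'', hk', hk'', ⟨e₂⟩⟩ := h₂
  let p₁ := j'.pushoutInl k'
  let p₂ := j'.pushoutInr k'
  let := (SymmAlgebra.map F j).toRingHom.toAlgebra
  let := (SymmAlgebra.map F j').toRingHom.toAlgebra
  let := (SymmAlgebra.map F k').toRingHom.toAlgebra
  let := (SymmAlgebra.map F k'').toRingHom.toAlgebra
  let := (SymmAlgebra.map F p₁).toRingHom.toAlgebra
  let := (SymmAlgebra.map F p₂).toRingHom.toAlgebra
  let := (SymmAlgebra.map F (p₁ ∘ₗ j)).toRingHom.toAlgebra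
  let := (SymmAlgebra.map F (p₁ ∘ₗ j')).toRingHom.toAlgebra
  let := (SymmAlgebra.map F (p₂ ∘ₗ k'')).toRingHom.toAlgebra
  have := SymmAlgebra.isScalarTower_map (f := j) (g := p₁) rfl
  have := SymmAlgebra.isScalarTower_map (f := j') (g := p₁) rfl
  -- `Sym(W') → Sym(V)` is defined through `V₁`; it factors through `V₂` as well, so `e₁`, `e₂` meet.
  have := SymmAlgebra.isScalarTower_map (f := k') (g := p₂) (j'.pushoutInl_comp k').symm
  have := SymmAlgebra.isScalarTower_map (f := k'') (g := p₂) rfl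
  exact ⟨_, _, _, p₁ ∘ₗ j, p₂ ∘ₗ k'', (LinearMap.pushoutInl_injective hk').comp hj,
    (LinearMap.pushoutInr_injective hj').comp hk'',
    ⟨e₁.extendBaseChange ≪≫ₗ e₂.extendBaseChange⟩⟩

end StablyIso

/-- Stable isomorphism is an equivalence relation on pairs `(M, W)`: it is reflexive,
symmetric and, in particular, transitive. -/
theorem stmt_5 (F : Type) [Field F] :
    (∀ (W : Type) (_ : AddCommGroup W), ∀ (_ : Module F W)
      (M : Type) (_ : AddCommGroup M), ∀ (_ : Module (SymmAlgebra F W) M),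
        StablyIso F W W M M) ∧
    (∀ (W W' : Type) (_ : AddCommGroup W) (_ : AddCommGroup W'),
      ∀ (_ : Module F W) (_ : Module F W')
      (M M' : Type) (_ : AddCommGroup M) (_ : AddCommGroup M'),
      ∀ (_ : Module (SymmAlgebra F W) M) (_ : Module (SymmAlgebra F W') M'),
        StablyIso F W W' M M' → StablyIso F W' W M' M) ∧
    (∀ (W W' W'' : Type) (_ : AddCommGroup W) (_ : AddCommGroup W') (_ : AddCommGroup W''),
      ∀ (_ : Module F W) (_ : Module F W') (_ : Module F W'')
      (M M' M'' : Type) (_ : AddCommGroup M) (_ : AddCommGroup M') (_ : AddCommGroup M''),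
      ∀ (_ : Module (SymmAlgebra F W) M) (_ : Module (SymmAlgebra F W') M')
        (_ : Module (SymmAlgebra F W'') M''),
        StablyIso F W W' M M' → StablyIso F W' W'' M' M'' →
          StablyIso F W W'' M M'') :=
  ⟨fun _ _ _ _ _ _ => .refl, fun _ _ _ _ _ _ _ _ _ _ _ _ => .symm,
    fun _ _ _ _ _ _ _ _ _ _ _ _ _ _ _ _ _ _ => .trans⟩
end

section
/- Let G be a finite connected multigraph with edge set E, and assign to each edge e a weight κ(e) ∈ ℤ[δ] with κ(e) = 1 or κ(e) = δ. Let A be the weighted Laplacian matrix of G (A_{ij} = −∑ κ(e) over edges e between distinct vertices i and j, and A_{ii} = −∑_{j≠i} A_{ij}). Then the determinant of the (1,1)-minor of A equals ∑_T ∏_{e∈T} κ(e), where the sum is over all spanning trees T of G (the weighted Matrix-Tree theorem). -/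
/-!
Orient every edge arbitrarily and let `N` be the signed incidence matrix. The Laplacian is
`N * diagonal κ * Nᵀ`, so by Cauchy–Binet the determinant of its reduced form is
`∑_{|S| = n} (∏_{e ∈ S} κ e) * det (N₀[S])²`, where `N₀[S]` keeps the rows of the vertices
`≠ 0` and the columns of the edges in `S`. If `S` connects the graph, the columns of `N₀[S]`
span `ℤⁿ` (the difference of the unit vectors of two vertices joined by a path lies in their
span), so `det N₀[S] = ±1`; otherwise the indicator of the vertices not reached from `0` is a
nonzero vector in its left kernel, so `det N₀[S] = 0`.
-/

open Finset Matrix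

namespace Matrix

theorem eq_of_offDiag_eq_of_sum_row_eq_zero {V M : Type*} [Fintype V] [DecidableEq V]
    [AddCommGroup M] {A B : Matrix V V M} (hoff : ∀ i j, i ≠ j → A i j = B i j) (hA : ∀ i, ∑ j, A i j = 0)
    (hB : ∀ i, ∑ j, B i j = 0) : A = B := by
  refine Matrix.ext fun i j => ?_
  obtain rfl | hij := eq_or_ne i j
  · have hA := hA i
    have hB := hB i
    rw [← add_sum_erase _ _ (mem_univ i)] at hA hB
    rw [sum_congr rfl fun j hj => hoff i j (ne_of_mem_erase hj).symm] at hA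
    exact add_right_cancel (hA.trans hB.symm)
  · exact hoff i j hij

variable {R : Type*} [CommRing R] {ι E : Type*} [Fintype ι]

theorem det_submatrix_eq_zero_of_not_injective [DecidableEq ι] (C : Matrix E ι R) {f : ι → E}
    (hf : ¬ f.Injective) : (C.submatrix f id).det = 0 := by
  obtain ⟨i, j, hij, hne⟩ : ∃ i j, f i = f j ∧ i ≠ j := by
    simpa [Function.Injective] using hf
  exact det_zero_of_row_eq hne (by ext; simp [hij])

variable [Fintype E]

theorem mul_diagonal_indicator_mul_transpose [DecidableEq E] (M : Matrix ι E R) (S : Finset E)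
    (σ : ι ≃ S) :
    M * diagonal (fun e => if e ∈ S then (1 : R) else 0) * Mᵀ =
      M.submatrix id (fun i => σ i) * (M.submatrix id (fun i => σ i))ᵀ := by
  refine Matrix.ext fun i j => ?_
  rw [mul_apply, mul_apply]
  simp only [mul_diagonal, transpose_apply, submatrix_apply, id, mul_ite, mul_one, mul_zero,
    ite_mul, zero_mul]
  rw [← sum_filter, filter_mem_eq_inter, univ_inter, ← sum_coe_sort S]
  exact (σ.sum_comp fun e : S => M i e * M j e).symm

variable [DecidableEq ι]

theorem det_mul_eq_sum_prod_mul_det_submatrix (B : Matrix ι E R) (C : Matrix E ι R) :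
    (B * C).det = ∑ f : ι → E, (∏ i, B i (f i)) * (C.submatrix f id).det := by
  have hrows : B * C = fun i => ∑ e, B i e • C e := by
    ext i j; simp [mul_apply]
  rw [hrows]
  exact (detRowAlternating.map_sum _).trans
    (sum_congr rfl fun f _ => det_mul_column (fun i => B i (f i)) (C.submatrix f id))

variable [DecidableEq E]

theorem det_mul_diagonal_mul_transpose_eq_sum_image (M : Matrix ι E R) (w : E → R) :
    (M * diagonal w * Mᵀ).det = ∑ S ∈ powersetCard (Fintype.card ι) univ, (∏ e ∈ S, w e) *
      ∑ f with univ.image f = S, (∏ i, M i (f i)) * (Mᵀ.submatrix f id).det := by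
  have hterm : ∀ f : ι → E, (∏ i, (M * diagonal w) i (f i)) * (Mᵀ.submatrix f id).det =
      (∏ e ∈ univ.image f, w e) * ((∏ i, M i (f i)) * (Mᵀ.submatrix f id).det) := by
    intro f
    by_cases hf : f.Injective
    · simp only [mul_diagonal, prod_mul_distrib, prod_image fun i _ j _ h => hf h]
      ring
    · simp [det_submatrix_eq_zero_of_not_injective _ hf]
  rw [det_mul_eq_sum_prod_mul_det_submatrix, sum_congr rfl fun f _ => hterm f,
    ← sum_fiberwise univ (fun f => univ.image f), ← sum_subset (subset_univ _)]
  · refine sum_congr rfl fun S _ => ?_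
    rw [mul_sum]
    exact sum_congr rfl fun f hf => by rw [(mem_filter.1 hf).2]
  · intro S _ hS
    refine sum_eq_zero fun f hf => ?_
    have hf : univ.image f = S := (mem_filter.1 hf).2
    have hninj : ¬ f.Injective := fun hinj => hS <| mem_powersetCard.2
      ⟨subset_univ _, by rw [← hf, card_image_of_injective _ hinj, card_univ]⟩
    simp [det_submatrix_eq_zero_of_not_injective _ hninj]

/-- The expansion above, applied to the indicator weights of `S`, identifies the coefficient of
`∏ e ∈ S, w e` with the Gram determinant of the columns in `S`. -/
theorem det_mul_diagonal_mul_transpose (M : Matrix ι E R) (w : E → R) :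
    (M * diagonal w * Mᵀ).det = ∑ S ∈ powersetCard (Fintype.card ι) univ,
      (∏ e ∈ S, w e) * (M * diagonal (fun e => if e ∈ S then (1 : R) else 0) * Mᵀ).det := by
  rw [det_mul_diagonal_mul_transpose_eq_sum_image]
  refine sum_congr rfl fun S hS => congrArg _ ?_
  rw [det_mul_diagonal_mul_transpose_eq_sum_image, sum_eq_single S]
  · rw [prod_boole, if_pos fun _ h => h, one_mul]
  · intro T hT hTS
    rw [prod_boole, if_neg, zero_mul]
    intro hsub
    exact hTS (eq_of_subset_of_card_le hsub (by
      rw [(mem_powersetCard.1 hS).2, (mem_powersetCard.1 hT).2]))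
  · exact fun h => absurd hS h

end Matrix

section Connectivity

variable {V E : Type*} (ends : E → Sym2 V)

def EdgesConnect (S : Finset E) : Prop :=
  ∀ u v : V, Relation.EqvGen (fun u v => ∃ e ∈ S, ends e = s(u, v)) u v

theorem apply_eq_of_eqvGen {β : Type*} {S : Finset E} (g : V → β)
    (hg : ∀ e ∈ S, g (ends e).out.1 = g (ends e).out.2) {u v : V}
    (huv : Relation.EqvGen (fun u v => ∃ e ∈ S, ends e = s(u, v)) u v) : g u = g v := by
  refine congrArg (Quot.lift g ?_) (Quot.eqvGen_sound huv)
  rintro a b ⟨e, he, hends⟩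
  have hout : s((ends e).out.1, (ends e).out.2) = s(a, b) := (ends e).out_eq.trans hends
  rcases Sym2.eq_iff.1 hout with ⟨ha, hb⟩ | ⟨ha, hb⟩ <;> rw [← ha, ← hb, hg e he]

end Connectivity

section Incidence

variable {V E : Type*} [DecidableEq V] (R : Type*) [CommRing R] (ends : E → Sym2 V)

/-- Each edge is oriented from `out.1` to `out.2` of an arbitrary representative of its
endpoints; a loop gets a zero column. -/
noncomputable def signedIncidence : Matrix V E R :=
  of fun v e => (if v = (ends e).out.1 then 1 else 0) - (if v = (ends e).out.2 then 1 else 0)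

variable {R}

theorem signedIncidence_map_intCast :
    (signedIncidence ℤ ends).map (Int.cast : ℤ → R) = signedIncidence R ends := by
  ext v e; simp [signedIncidence]

theorem sum_mul_signedIncidence [Fintype V] (y : V → R) (e : E) :
    ∑ v, y v * signedIncidence R ends v e = y (ends e).out.1 - y (ends e).out.2 := by
  simp [signedIncidence, mul_sub, sum_sub_distrib]

theorem signedIncidence_mul_signedIncidence_of_ne {i j : V} (hij : i ≠ j) (e : E) :
    signedIncidence R ends i e * signedIncidence R ends j e =
      if ends e = s(i, j) then -1 else 0 := by
  have hends : ends e = s((ends e).out.1, (ends e).out.2) := (ends e).out_eq.symm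
  simp only [signedIncidence, of_apply]
  generalize (ends e).out.1 = a, (ends e).out.2 = b at hends ⊢
  simp only [hends, Sym2.eq_iff]
  split_ifs <;> grind

theorem eq_signedIncidence_mul_diagonal_mul_transpose [Fintype V] [Fintype E] [DecidableEq E]
    (κ : E → R) (A : Matrix V V R)
    (hAoff : ∀ i j, i ≠ j → A i j = -∑ e with ends e = s(i, j), κ e)
    (hAdiag : ∀ i, A i i = -∑ j ∈ univ.erase i, A i j) :
    A = signedIncidence R ends * diagonal κ * (signedIncidence R ends)ᵀ := by
  have hentry : ∀ i j, (signedIncidence R ends * diagonal κ * (signedIncidence R ends)ᵀ) i j =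
      ∑ e, signedIncidence R ends i e * κ e * signedIncidence R ends j e := by
    intro i j
    rw [mul_apply]
    simp only [mul_diagonal, transpose_apply]
  refine eq_of_offDiag_eq_of_sum_row_eq_zero (fun i j hij => ?_) (fun i => ?_) (fun i => ?_)
  · simp only [hAoff i j hij, hentry, mul_right_comm _ (κ _),
      signedIncidence_mul_signedIncidence_of_ne ends hij, sum_filter, ← sum_neg_distrib]
    exact sum_congr rfl fun e _ => by split_ifs <;> simp
  · rw [← add_sum_erase _ _ (mem_univ i), hAdiag, neg_add_cancel]
  · simp only [hentry]
    rw [sum_comm]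
    refine sum_eq_zero fun e _ => ?_
    have hcol : ∑ j, signedIncidence R ends j e = 0 := by
      simpa using sum_mul_signedIncidence ends (fun _ => (1 : R)) e
    rw [← mul_sum, hcol, mul_zero]

end Incidence

section Minor

variable {n : ℕ} {E : Type*} (ends : E → Sym2 (Fin (n + 1))) {S : Finset E} (σ : Fin n ≃ S)

theorem isUnit_det_signedIncidence_submatrix (hS : EdgesConnect ends S) :
    IsUnit ((signedIncidence ℤ ends).submatrix Fin.succ (fun k => (σ k : E))).det := by
  set M := (signedIncidence ℤ ends).submatrix Fin.succ (fun k => (σ k : E))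
  rw [← isUnit_iff_isUnit_det, ← mulVec_surjective_iff_isUnit]
  set W := LinearMap.range M.mulVecLin
  let g : Fin (n + 1) → (Fin n → ℤ) ⧸ W :=
    fun v => W.mkQ fun i => (Pi.single v 1 : Fin (n + 1) → ℤ) i.succ
  have hedge : ∀ e ∈ S, g (ends e).out.1 = g (ends e).out.2 := by
    intro e he
    refine (Submodule.Quotient.eq W).2 ⟨Pi.single (σ.symm ⟨e, he⟩) 1, ?_⟩
    ext i
    simp [M, signedIncidence, Pi.single_apply]
  have hbasis : ∀ j : Fin n, Pi.single j 1 ∈ W := by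
    intro j
    have := (Submodule.Quotient.eq W).1 (apply_eq_of_eqvGen ends g hedge (hS j.succ 0))
    convert this using 1
    ext i
    simp [Pi.single_apply, Fin.succ_ne_zero]
  intro y
  have hy : y ∈ W := by
    rw [pi_eq_sum_univ' y]
    exact W.sum_mem fun j _ => W.smul_mem _ (hbasis j)
  exact hy

theorem det_signedIncidence_submatrix_eq_zero (hS : ¬ EdgesConnect ends S) :
    ((signedIncidence ℤ ends).submatrix Fin.succ (fun k => (σ k : E))).det = 0 := by
  classical
  rw [← exists_vecMul_eq_zero_iff]
  let P : Fin (n + 1) → Prop := Relation.EqvGen (fun u v => ∃ e ∈ S, ends e = s(u, v)) 0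
  let y : Fin (n + 1) → ℤ := fun v => if P v then 0 else 1
  have hP0 : P 0 := Relation.EqvGen.refl 0
  obtain ⟨v, hv⟩ : ∃ v, ¬ P v := by
    by_contra! hall
    exact hS fun u v => (hall u).symm.trans _ _ _ (hall v)
  obtain rfl | ⟨j, rfl⟩ := Fin.eq_zero_or_eq_succ v
  · exact absurd hP0 hv
  refine ⟨fun i => y i.succ, fun h => by simpa [y, hv] using congrFun h j, ?_⟩
  ext k
  have hedge : P (ends (σ k)).out.1 ↔ P (ends (σ k)).out.2 := by
    have hrel : Relation.EqvGen (fun u v => ∃ e ∈ S, ends e = s(u, v))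
        (ends (σ k)).out.1 (ends (σ k)).out.2 :=
      .rel _ _ ⟨σ k, (σ k).2, (ends (σ k)).out_eq.symm⟩
    exact ⟨fun h => h.trans _ _ _ hrel, fun h => h.trans _ _ _ hrel.symm⟩
  calc ((fun i => y i.succ) ᵥ* (signedIncidence ℤ ends).submatrix Fin.succ (σ · : Fin n → E)) k
      = ∑ v, y v * signedIncidence ℤ ends v (σ k) := by
        simp [vecMul, dotProduct, Fin.sum_univ_succ, y, hP0]
    _ = 0 := by rw [sum_mul_signedIncidence]; simp [y, hedge]

theorem det_signedIncidence_mul_diagonal_indicator_mul_transpose {R : Type*} [CommRing R]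
    [Fintype E] [DecidableEq E] (S : Finset E) (hcard : S.card = n)
    [Decidable (EdgesConnect ends S)] :
    ((signedIncidence R ends).submatrix Fin.succ id *
        diagonal (fun e => if e ∈ S then (1 : R) else 0) *
        ((signedIncidence R ends).submatrix Fin.succ id)ᵀ).det =
      if EdgesConnect ends S then 1 else 0 := by
  set σ : Fin n ≃ S := (S.equivFinOfCardEq hcard).symm
  rw [mul_diagonal_indicator_mul_transpose _ S σ, det_mul, det_transpose, submatrix_submatrix,
    ← signedIncidence_map_intCast, submatrix_map, ← Int.cast_det, ← Int.cast_mul, ← sq]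
  split_ifs with h
  · simp [Int.isUnit_sq (isUnit_det_signedIncidence_submatrix ends σ h)]
  · simp [det_signedIncidence_submatrix_eq_zero ends σ h]

end Minor

open Finset in
open scoped Classical in
theorem stmt_19_general (n : ℕ) (E : Type) [Fintype E] [DecidableEq E]
    (ends : E → Sym2 (Fin (n + 1)))
    (κ : E → Polynomial ℤ)
    (A : Matrix (Fin (n + 1)) (Fin (n + 1)) (Polynomial ℤ))
    (hAoff : ∀ i j, i ≠ j →
      A i j = -(∑ e ∈ Finset.univ.filter (fun e => ends e = s(i, j)), κ e))
    (hAdiag : ∀ i, A i i = -(∑ j ∈ Finset.univ.erase i, A i j)) :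
    (A.submatrix (Fin.succ) (Fin.succ)).det
      = ∑ T ∈ (Finset.univ : Finset E).powerset.filter
          (fun T => T.card = n ∧ ∀ u v : Fin (n + 1),
            Relation.EqvGen (fun u v => ∃ e ∈ T, ends e = s(u, v)) u v),
        ∏ e ∈ T, κ e := by
  set N := (signedIncidence (Polynomial ℤ) ends).submatrix Fin.succ id
  have hA : A.submatrix Fin.succ Fin.succ = N * diagonal κ * Nᵀ := by
    rw [eq_signedIncidence_mul_diagonal_mul_transpose ends κ A hAoff hAdiag]
    rfl
  rw [hA, det_mul_diagonal_mul_transpose, Fintype.card_fin, powersetCard_eq_filter,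
    ← filter_filter, sum_filter _ fun T => ∏ e ∈ T, κ e]
  refine sum_congr rfl fun S hS => ?_
  rw [det_signedIncidence_mul_diagonal_indicator_mul_transpose ends S (mem_filter.1 hS).2,
    mul_ite, mul_one, mul_zero]
  exact if_congr Iff.rfl rfl rfl

open Finset in
open scoped Classical in
/-- Weighted Matrix-Tree theorem.  Let `G` be a finite connected multigraph on vertices
`{0, …, n}` with edge set `E`, endpoints `ends : E → Sym2 (Fin (n+1))`, and edge weights
`κ(e) ∈ ℤ[δ]` with each `κ(e) = 1` or `κ(e) = δ`.  Let `A` be the weighted Laplacian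
(`A i j = −∑ κ(e)` over edges between distinct `i, j`, and `A i i = −∑_{j≠i} A i j`).
Then the determinant of the `(1,1)`-minor of `A` (deleting vertex `0`) equals
`∑_T ∏_{e ∈ T} κ(e)` over all spanning trees `T` of `G` (encoded as edge sets of
cardinality `n` connecting all the vertices). -/
theorem stmt_19 (n : ℕ) (E : Type) [Fintype E] [DecidableEq E]
    (ends : E → Sym2 (Fin (n + 1)))
    (κ : E → Polynomial ℤ) (hκ : ∀ e, κ e = 1 ∨ κ e = Polynomial.X)
    (hconn : ∀ u v : Fin (n + 1),
      Relation.EqvGen (fun u v => ∃ e : E, ends e = s(u, v)) u v)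
    (A : Matrix (Fin (n + 1)) (Fin (n + 1)) (Polynomial ℤ))
    (hAoff : ∀ i j, i ≠ j →
      A i j = -(∑ e ∈ Finset.univ.filter (fun e => ends e = s(i, j)), κ e))
    (hAdiag : ∀ i, A i i = -(∑ j ∈ Finset.univ.erase i, A i j)) :
    (A.submatrix (Fin.succ) (Fin.succ)).det
      = ∑ T ∈ (Finset.univ : Finset E).powerset.filter
          (fun T => T.card = n ∧ ∀ u v : Fin (n + 1),
            Relation.EqvGen (fun u v => ∃ e ∈ T, ends e = s(u, v)) u v),
        ∏ e ∈ T, κ e :=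
  stmt_19_general n E ends κ A hAoff hAdiag
end
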